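/- Statement (A) is equivalent to the following dominating-function property: for any family F of functions from ω₁ to ω₁ with |F| ≤ ω₂, there exists an injective function g : ω₁ → ω₁ such that for every f ∈ F there exists i < ω₁ such that for all γ ∈ ω₁ \ i, f(γ) < g(γ). -/

import Mathlib

/-!
Clubs and functions `ω₁ → ω₁` translate into each other: a function `h` gives the club of its
closure points `{α | ∀ γ < α, h γ < α}`, and a club `C` gives the function sending `γ` to the next
element of `C` above `γ`.

If a club `E` is almost contained in the closure-point club of every `f ∈ F`, then from some
countable stage on the next element of `E` above `γ` is a closure point of `f`, hence exceeds
`f γ`; adding `γ` to it makes the dominating function strictly increasing, so injective.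
Conversely, if `g` eventually dominates the next-element function of `C`, then every closure
point of `g` past that stage is a limit of elements of `C`, hence lies in `C`.
-/

noncomputable section

abbrev Ordi : Type 1 := Ordinal.{0}

/-- The ordinal `ω₁`. -/
def w1 : Ordi := (Cardinal.aleph 1).ord

/-- `C` is a club (closed and unbounded) subset of `κ`. -/
def IsClubIn (C : Set Ordi) (κ : Ordi) : Prop :=
  C ⊆ Set.Iio κ ∧ (∀ α < κ, ∃ β ∈ C, α ≤ β) ∧
    ∀ α, 0 < α → α < κ → (∀ β < α, ∃ γ ∈ C, β < γ ∧ γ < α) → α ∈ C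

/-- Statement (A): any family of at most `ω₂`-many club subsets of `ω₁` can be
diagonalized by a single club `E` such that `E \ C` is countable for every `C`
in the family. -/
def StatementA : Prop :=
  ∀ 𝒞 : Set (Set Ordi), (∀ C ∈ 𝒞, IsClubIn C w1) →
    Cardinal.mk ↥𝒞 ≤ Cardinal.aleph 2 →
    ∃ E : Set Ordi, IsClubIn E w1 ∧ ∀ C ∈ 𝒞, (E \ C).Countable

open Cardinal Ordinal Set

lemma w1_eq_omega_one : w1 = ω₁ := ord_aleph 1

lemma succ_lt_w1 {α : Ordi} (h : α < w1) : Order.succ α < w1 := by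
  rw [w1_eq_omega_one] at *
  exact (isSuccLimit_omega 1).succ_lt h

lemma iSup_lt_w1 {ι : Type*} [Countable ι] {f : ι → Ordi} (hf : ∀ i, f i < w1) :
    ⨆ i, f i < w1 := by
  rw [w1_eq_omega_one] at *
  exact iSup_lt_omega_one hf

lemma countable_Iio_of_lt_w1 {α : Ordi} (h : α < w1) : (Iio α).Countable := by
  rw [← le_aleph0_iff_set_countable, Cardinal.mk_Iio_ordinal, lift_le_aleph0,
    ← lt_aleph_one_iff]
  exact lt_ord.mp h

lemma countable_Iic_of_lt_w1 {α : Ordi} (h : α < w1) : (Iic α).Countable :=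
  Set.Iio_succ_eq_Iic α ▸ countable_Iio_of_lt_w1 (succ_lt_w1 h)

lemma exists_lt_w1_forall_lt_of_countable {S : Set Ordi} (hc : S.Countable)
    (hS : ∀ x ∈ S, x < w1) : ∃ b < w1, ∀ x ∈ S, x < b := by
  have : Countable S := hc.to_subtype
  have hbdd : BddAbove (range fun x : S => Order.succ (x : Ordi)) :=
    ⟨w1, forall_mem_range.2 fun x => (succ_lt_w1 (hS x x.2)).le⟩
  refine ⟨⨆ x : S, Order.succ (x : Ordi), ?_, fun x hx => ?_⟩
  · exact iSup_lt_w1 fun x => succ_lt_w1 (hS x x.2)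
  · exact (Order.lt_succ x).trans_le (le_ciSup hbdd ⟨x, hx⟩)

def closurePoints (h : Ordi → Ordi) : Set Ordi := {α | α < w1 ∧ ∀ γ < α, h γ < α}

lemma exists_mem_closurePoints_ge {h : Ordi → Ordi} (hh : ∀ γ < w1, h γ < w1) {α : Ordi}
    (hα : α < w1) : ∃ β ∈ closurePoints h, α ≤ β := by
  let H : Ordi → Ordi := fun x => ⨆ γ : Iio x, Order.succ (h γ)
  have lt_H : ∀ x, ∀ γ < x, h γ < H x := fun x γ hγ =>
    (Order.lt_succ _).trans_le (le_ciSup Ordinal.bddAbove_of_small (⟨γ, hγ⟩ : Iio x))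
  have H_lt : ∀ x < w1, H x < w1 := fun x hx => by
    have := (countable_Iio_of_lt_w1 hx).to_subtype
    exact iSup_lt_w1 fun γ => succ_lt_w1 (hh γ (γ.2.trans hx))
  have cof_w1 : ℵ₀ < w1.cof := by
    rw [w1_eq_omega_one, cof_omega_one]
    exact aleph0_lt_aleph_one
  refine ⟨nfp H α, ⟨nfp_lt_ord cof_w1 H_lt hα, fun γ hγ => ?_⟩, le_nfp H α⟩
  obtain ⟨n, hn⟩ := lt_nfp_iff.1 hγ
  calc h γ < H (H^[n] α) := lt_H _ γ hn
    _ = H^[n + 1] α := (Function.iterate_succ_apply' H n α).symm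
    _ ≤ nfp H α := iterate_le_nfp H α (n + 1)

lemma isClubIn_closurePoints {h : Ordi → Ordi} (hh : ∀ γ < w1, h γ < w1) :
    IsClubIn (closurePoints h) w1 := by
  refine ⟨fun α hα => hα.1, fun α hα => exists_mem_closurePoints_ge hh hα,
    fun α _ hα hcof => ⟨hα, fun γ hγ => ?_⟩⟩
  obtain ⟨β, hβ, hγβ, hβα⟩ := hcof γ hγ
  exact (hβ.2 γ hγβ).trans hβα

def nextIn (C : Set Ordi) (γ : Ordi) : Ordi := sInf {β ∈ C | γ < β}

lemma nextIn_le {C : Set Ordi} {γ β : Ordi} (hβ : β ∈ C) (hγβ : γ < β) : nextIn C γ ≤ β :=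
  csInf_le' ⟨hβ, hγβ⟩

namespace IsClubIn

variable {C : Set Ordi} {γ : Ordi}

lemma exists_mem_gt (hC : IsClubIn C w1) (hγ : γ < w1) : ∃ β ∈ C, γ < β := by
  obtain ⟨β, hβ, hle⟩ := hC.2.1 _ (succ_lt_w1 hγ)
  exact ⟨β, hβ, (Order.lt_succ γ).trans_le hle⟩

lemma nextIn_mem (hC : IsClubIn C w1) (hγ : γ < w1) : nextIn C γ ∈ C :=
  (csInf_mem (hC.exists_mem_gt hγ)).1

lemma lt_nextIn (hC : IsClubIn C w1) (hγ : γ < w1) : γ < nextIn C γ :=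
  (csInf_mem (hC.exists_mem_gt hγ)).2

lemma nextIn_lt_w1 (hC : IsClubIn C w1) (hγ : γ < w1) : nextIn C γ < w1 :=
  hC.1 (hC.nextIn_mem hγ)

lemma nextIn_mono (hC : IsClubIn C w1) {δ : Ordi} (hδ : δ < w1) (hγδ : γ ≤ δ) :
    nextIn C γ ≤ nextIn C δ :=
  nextIn_le (hC.nextIn_mem hδ) (hγδ.trans_lt (hC.lt_nextIn hδ))

lemma strictMonoOn_nextIn_add_self (hC : IsClubIn C w1) :
    StrictMonoOn (fun γ => nextIn C γ + γ) (Iio w1) := fun γ _ δ hδ hγδ =>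
  calc nextIn C γ + γ < nextIn C γ + δ := add_lt_add_right hγδ _
    _ ≤ nextIn C δ + δ := add_le_add_left (hC.nextIn_mono hδ hγδ.le) _

lemma nextIn_add_self_lt_w1 (hC : IsClubIn C w1) (hγ : γ < w1) : nextIn C γ + γ < w1 :=
  isPrincipal_add_ord (aleph0_le_aleph 1) (hC.nextIn_lt_w1 hγ) hγ

lemma apply_lt_nextIn {f : Ordi → Ordi} {b : Ordi} (hC : IsClubIn C w1)
    (hb : ∀ x ∈ C \ closurePoints f, x < b) (hbγ : b ≤ γ) (hγ : γ < w1) : f γ < nextIn C γ := by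
  have hcl : nextIn C γ ∈ closurePoints f := by
    by_contra hn
    exact (hb _ ⟨hC.nextIn_mem hγ, hn⟩).not_ge (hbγ.trans (hC.lt_nextIn hγ).le)
  exact hcl.2 γ (hC.lt_nextIn hγ)

lemma mem_of_mem_closurePoints {g : Ordi → Ordi} {i α : Ordi} (hC : IsClubIn C w1)
    (hdom : ∀ γ, i ≤ γ → γ < w1 → nextIn C γ < g γ) (hα : α ∈ closurePoints g) (hiα : i < α) :
    α ∈ C := by
  refine hC.2.2 α (zero_le.trans_lt hiα) hα.1 fun β hβ => ?_
  have hδα : max β i < α := max_lt hβ hiα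
  have hδ : max β i < w1 := hδα.trans hα.1
  exact ⟨nextIn C (max β i), hC.nextIn_mem hδ, (le_max_left β i).trans_lt (hC.lt_nextIn hδ),
    (hdom _ (le_max_right β i) hδ).trans (hα.2 _ hδα)⟩

end IsClubIn

/-- Statement (A) is equivalent to the dominating-function property: for any family
`F` of functions from `ω₁` to `ω₁` with `|F| ≤ ω₂`, there is an injective
`g : ω₁ → ω₁` such that every `f ∈ F` is eventually strictly dominated by `g`. -/
theorem statementA_iff_dominating :
    StatementA ↔
      ∀ F : Set (Ordi → Ordi),
        (∀ f ∈ F, ∀ γ < w1, f γ < w1) →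
        Cardinal.mk ↥F ≤ Cardinal.aleph 2 →
        ∃ g : Ordi → Ordi, Set.InjOn g (Set.Iio w1) ∧ (∀ γ < w1, g γ < w1) ∧
          ∀ f ∈ F, ∃ i < w1, ∀ γ, i ≤ γ → γ < w1 → f γ < g γ := by
  constructor
  · intro hA F hF hFcard
    obtain ⟨E, hE, hEF⟩ := hA (closurePoints '' F)
      (forall_mem_image.2 fun f hf => isClubIn_closurePoints (hF f hf))
      (mk_image_le.trans hFcard)
    refine ⟨fun γ => nextIn E γ + γ, hE.strictMonoOn_nextIn_add_self.injOn,
      fun γ => hE.nextIn_add_self_lt_w1, fun f hf => ?_⟩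
    obtain ⟨b, hb, hbE⟩ := exists_lt_w1_forall_lt_of_countable (hEF _ (mem_image_of_mem _ hf))
      fun x hx => hE.1 hx.1
    exact ⟨b, hb, fun γ hbγ hγ => (hE.apply_lt_nextIn hbE hbγ hγ).trans_le le_self_add⟩
  · intro hD 𝒞 h𝒞 h𝒞card
    obtain ⟨g, -, hg, hgF⟩ := hD (nextIn '' 𝒞)
      (forall_mem_image.2 fun C hC γ => (h𝒞 C hC).nextIn_lt_w1)
      (mk_image_le.trans h𝒞card)
    refine ⟨closurePoints g, isClubIn_closurePoints hg, fun C hC => ?_⟩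
    obtain ⟨i, hi, hiC⟩ := hgF _ (mem_image_of_mem _ hC)
    exact (countable_Iic_of_lt_w1 hi).mono fun α hα =>
      not_lt.1 fun hiα => hα.2 ((h𝒞 C hC).mem_of_mem_closurePoints hiC hα.1 hiα)

end
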